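/- arXiv:2602.10253 — 9 statements merged into one kernel-verified Lean document; each statement's English description precedes it below -/
import Mathlib

section
/- Let D₁ and D₂ be directed graphs with common vertex set V_com = V(D₁) ∩ V(D₂), and let V₁, V₂ be vertex subsets with V_com ⊆ V₁ ⊆ V(D₁) and V_com ⊆ V₂ ⊆ V(D₂). Then the reachability relation of D₁ ∪ D₂ restricted to V₁ ∪ V₂ equals the transitive closure of the union of the reachability relation of D₁ restricted to V₁ and the reachability relation of D₂ restricted to V₂. -/
/-!
Follow a directed path of `D₁ ∪ D₂` between vertices of `V₁ ∪ V₂` and cut it wherever it switches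
from arcs of one graph to arcs of the other. A switching vertex lies in both graphs, hence in
`V₁ ∩ V₂`; the same holds for an endpoint lying in the `V`-set of the other graph only. So every
maximal monochromatic piece of the path joins two vertices of the corresponding `Vᵢ`. The argument
works verbatim for any family of digraphs in which each `Vᵢ` contains every vertex that `Dᵢ`
shares with another member of the family.
-/

/-- `ConR V' A` : reachability relation (by nonempty directed paths, i.e. the
transitive closure of the arc relation) restricted to the vertex set `V'`. -/
def ConR {α : Type*} (V' : Set α) (A : α → α → Prop) : α → α → Prop :=
  fun x y => x ∈ V' ∧ y ∈ V' ∧ Relation.TransGen A x y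

open Relation

namespace ConR

variable {α : Type*} {U W : Set α} {A B : α → α → Prop} {x y z : α}

theorem trans (hxy : ConR U A x y) (hyz : ConR U A y z) : ConR U A x z :=
  ⟨hxy.1, hyz.2.1, hxy.2.2.trans hyz.2.2⟩

theorem mono (hUW : U ⊆ W) (hAB : ∀ a b, A a b → B a b) (h : ConR U A x y) : ConR W B x y :=
  ⟨hUW h.1, hUW h.2.1, TransGen.mono hAB _ _ h.2.2⟩

end ConR

section Family

variable {α ι : Type*} {VD V : ι → Set α} {A : ι → α → α → Prop}

theorem mem_of_transGen_of_arc_mem (hA : ∀ i x y, A i x y → x ∈ VD i ∧ y ∈ VD i) {i : ι}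
    {x y : α} (h : TransGen (A i) x y) : y ∈ VD i := by
  obtain ⟨b, -, hby⟩ := TransGen.tail'_iff.mp h
  exact (hA i b y hby).2

theorem mem_of_mem_iUnion_of_mem_vertices (hV : ∀ i, V i ⊆ VD i)
    (hshared : ∀ i j, i ≠ j → VD i ∩ VD j ⊆ V i) {i : ι} {x : α}
    (hx : x ∈ ⋃ j, V j) (hxi : x ∈ VD i) : x ∈ V i := by
  obtain ⟨j, hxj⟩ := Set.mem_iUnion.mp hx
  by_cases hij : i = j
  · exact hij ▸ hxj
  · exact hshared i j hij ⟨hxi, hV j hxj⟩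

variable (hA : ∀ i x y, A i x y → x ∈ VD i ∧ y ∈ VD i) (hV : ∀ i, V i ⊆ VD i)
  (hshared : ∀ i j, i ≠ j → VD i ∩ VD j ⊆ V i)
include hA hV hshared

theorem exists_checkpoint_of_transGen {x z : α} (hx : x ∈ ⋃ i, V i)
    (h : TransGen (fun a b => ∃ i, A i a b) x z) :
    ∃ w i, ReflTransGen (fun a b => ∃ i, ConR (V i) (A i) a b) x w ∧
      w ∈ V i ∧ TransGen (A i) w z := by
  induction h with
  | single hxz =>
    obtain ⟨i, hxz⟩ := hxz
    exact ⟨x, i, .refl, mem_of_mem_iUnion_of_mem_vertices hV hshared hx (hA i x _ hxz).1,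
      .single hxz⟩
  | @tail z z' _ hzz' ih =>
    obtain ⟨w, i, hxw, hwi, hwz⟩ := ih
    obtain ⟨j, hzz'⟩ := hzz'
    by_cases hji : j = i
    · subst hji
      exact ⟨w, j, hxw, hwi, hwz.tail hzz'⟩
    · have hz : z ∈ VD i ∩ VD j := ⟨mem_of_transGen_of_arc_mem hA hwz, (hA j z z' hzz').1⟩
      have hzi : z ∈ V i := hshared i j (Ne.symm hji) hz
      have hzj : z ∈ V j := hshared j i hji (Set.inter_comm _ _ ▸ hz)
      exact ⟨z, j, hxw.tail ⟨i, hwi, hzi, hwz⟩, hzj, .single hzz'⟩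

theorem conR_iUnion_eq_transGen :
    ConR (⋃ i, V i) (fun x y => ∃ i, A i x y) =
      TransGen (fun x y => ∃ i, ConR (V i) (A i) x y) := by
  funext x y
  apply propext
  constructor
  · rintro ⟨hx, hy, hxy⟩
    obtain ⟨w, i, hxw, hwi, hwy⟩ := exists_checkpoint_of_transGen hA hV hshared hx hxy
    have hyi : y ∈ V i :=
      mem_of_mem_iUnion_of_mem_vertices hV hshared hy (mem_of_transGen_of_arc_mem hA hwy)
    exact TransGen.tail' hxw ⟨i, hwi, hyi, hwy⟩
  · intro h
    induction h with
    | single hxy =>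
      obtain ⟨i, hxy⟩ := hxy
      exact hxy.mono (Set.subset_iUnion V i) fun _ _ h => ⟨i, h⟩
    | tail _ hyz ih =>
      obtain ⟨i, hyz⟩ := hyz
      exact ih.trans (hyz.mono (Set.subset_iUnion V i) fun _ _ h => ⟨i, h⟩)

end Family

theorem stmt1 {α : Type*} (VD1 VD2 V1 V2 : Set α) (A1 A2 : α → α → Prop)
    (hA1 : ∀ x y, A1 x y → x ∈ VD1 ∧ y ∈ VD1)
    (hA2 : ∀ x y, A2 x y → x ∈ VD2 ∧ y ∈ VD2)
    (hc1 : VD1 ∩ VD2 ⊆ V1) (h1 : V1 ⊆ VD1)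
    (hc2 : VD1 ∩ VD2 ⊆ V2) (h2 : V2 ⊆ VD2) :
    ConR (V1 ∪ V2) (fun x y => A1 x y ∨ A2 x y) =
      Relation.TransGen (fun x y => ConR V1 A1 x y ∨ ConR V2 A2 x y) := by
  have h := conR_iUnion_eq_transGen (VD := fun b => cond b VD1 VD2) (V := fun b => cond b V1 V2)
    (A := fun b => cond b A1 A2)
    (by rintro (_ | _) <;> assumption) (by rintro (_ | _) <;> assumption)
    (by rintro (_ | _) (_ | _) hij <;> simp_all [Set.inter_comm])
  simp only [← Set.union_eq_iUnion, Bool.exists_bool, cond_false, cond_true] at h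
  simpa only [or_comm] using h
end

section
/- Let D₁ and D₂ be directed acyclic graphs with common vertex set V_com = V(D₁) ∩ V(D₂), and let V₁, V₂ satisfy V_com ⊆ V₁ ⊆ V(D₁) and V_com ⊆ V₂ ⊆ V(D₂). If the reachability relation Con(V₁ ∪ V₂, D₁ ∪ D₂) is irreflexive, then the union D₁ ∪ D₂ is a directed acyclic graph. -/
/-!
A directed cycle of `D₁ ∪ D₂` that lies in neither `D₁` nor `D₂` must pass from an arc of one
graph to an arc of the other; the vertex where this happens is a common vertex, hence in `V₁`.
Rotating the cycle to start there exhibits a vertex `v ∈ V₁ ∪ V₂` with `Con v v`.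
-/

open Relation

section

variable {α : Type*} {r s : α → α → Prop} {S T : Set α}

theorem Relation.TransGen.target_mem (hr : ∀ x y, r x y → y ∈ S) {a b : α}
    (h : TransGen r a b) : b ∈ S := by
  obtain ⟨_, _, hcb⟩ := TransGen.tail'_iff.mp h
  exact hr _ _ hcb

theorem Relation.TransGen.sup_trichotomy (hr : ∀ x y, r x y → x ∈ S ∧ y ∈ S)
    (hs : ∀ x y, s x y → x ∈ T ∧ y ∈ T) {a b : α} (h : TransGen (r ⊔ s) a b) :
    TransGen r a b ∨ TransGen s a b ∨
      ∃ v ∈ S ∩ T, TransGen (r ⊔ s) a v ∧ TransGen (r ⊔ s) v b := by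
  induction h with
  | single hab => exact hab.imp TransGen.single (Or.inl ∘ TransGen.single)
  | @tail b c hab hbc ih =>
    rcases ih with hr_ab | hs_ab | ⟨v, hv, hav, hvb⟩
    · rcases hbc with hr_bc | hs_bc
      · exact Or.inl (hr_ab.tail hr_bc)
      · exact Or.inr (Or.inr ⟨b, ⟨hr_ab.target_mem fun x y h => (hr x y h).2, (hs _ _ hs_bc).1⟩,
          hab, .single (Or.inr hs_bc)⟩)
    · rcases hbc with hr_bc | hs_bc
      · exact Or.inr (Or.inr ⟨b, ⟨(hr _ _ hr_bc).1, hs_ab.target_mem fun x y h => (hs x y h).2⟩,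
          hab, .single (Or.inl hr_bc)⟩)
      · exact Or.inr (Or.inl (hs_ab.tail hs_bc))
    · exact Or.inr (Or.inr ⟨v, hv, hav, hvb.tail hbc⟩)

theorem irreflexive_transGen_sup (hr : ∀ x y, r x y → x ∈ S ∧ y ∈ S)
    (hs : ∀ x y, s x y → x ∈ T ∧ y ∈ T) (hr_acyc : Irreflexive (TransGen r))
    (hs_acyc : Irreflexive (TransGen s)) (hST : ∀ v ∈ S ∩ T, ¬TransGen (r ⊔ s) v v) :
    Irreflexive (TransGen (r ⊔ s)) := by
  intro x hx
  rcases hx.sup_trichotomy hr hs with hr_xx | hs_xx | ⟨v, hv, hxv, hvx⟩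
  · exact hr_acyc x hr_xx
  · exact hs_acyc x hs_xx
  · exact hST v hv (hvx.trans hxv)

end

theorem stmt2_general {α : Type*} (VD1 VD2 V1 V2 : Set α) (A1 A2 : α → α → Prop)
    (hA1 : ∀ x y, A1 x y → x ∈ VD1 ∧ y ∈ VD1)
    (hA2 : ∀ x y, A2 x y → x ∈ VD2 ∧ y ∈ VD2)
    (hc1 : VD1 ∩ VD2 ⊆ V1)
    (hd1 : Irreflexive (Relation.TransGen A1))
    (hd2 : Irreflexive (Relation.TransGen A2))
    (hirr : Irreflexive (ConR (V1 ∪ V2) (fun x y => A1 x y ∨ A2 x y))) :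
    Irreflexive (Relation.TransGen (fun x y => A1 x y ∨ A2 x y)) :=
  irreflexive_transGen_sup hA1 hA2 hd1 hd2 fun v hv hvv =>
    hirr v ⟨Or.inl (hc1 hv), Or.inl (hc1 hv), hvv⟩

theorem stmt2 {α : Type*} (VD1 VD2 V1 V2 : Set α) (A1 A2 : α → α → Prop)
    (hA1 : ∀ x y, A1 x y → x ∈ VD1 ∧ y ∈ VD1)
    (hA2 : ∀ x y, A2 x y → x ∈ VD2 ∧ y ∈ VD2)
    (hc1 : VD1 ∩ VD2 ⊆ V1) (h1 : V1 ⊆ VD1)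
    (hc2 : VD1 ∩ VD2 ⊆ V2) (h2 : V2 ⊆ VD2)
    (hd1 : Irreflexive (Relation.TransGen A1))
    (hd2 : Irreflexive (Relation.TransGen A2))
    (hirr : Irreflexive (ConR (V1 ∪ V2) (fun x y => A1 x y ∨ A2 x y))) :
    Irreflexive (Relation.TransGen (fun x y => A1 x y ∨ A2 x y)) :=
  stmt2_general VD1 VD2 V1 V2 A1 A2 hA1 hA2 hc1 hd1 hd2 hirr
end

section
/- Let G be a connected graph and T a rooted spanning tree of G with local feedback edge number lfen(G,T) = k. Then for every vertex v of G, the boundary δ(v) (the set of endpoints of edges of G with exactly one endpoint in the vertex set of the subtree of T rooted at v) has size at most 2k + 2. -/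
open SimpleGraph

variable {V : Type*}

/-- The local feedback edge set of `v` w.r.t. spanning tree `T` of `G`. -/
def Eloc [Fintype V] (G T : SimpleGraph V) (v : V) : Set (Sym2 V) :=
  {e | e ∈ G.edgeSet ∧ e ∉ T.edgeSet ∧
    ∃ u w : V, e = s(u, w) ∧ ∀ p : T.Walk u w, p.IsPath → v ∈ p.support}

noncomputable def lfenWith [Fintype V] (G T : SimpleGraph V) : ℕ :=
  Finset.univ.sup fun v => (Eloc G T v).ncard

/-- Vertex set of the subtree of `T` (rooted at `r`) rooted at `w`. -/
def subtreeSet (T : SimpleGraph V) (r w : V) : Set V :=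
  {u | ∀ p : T.Walk r u, p.IsPath → w ∈ p.support}

/-- The boundary `δ(w)`: endpoints of edges of `G` with exactly one endpoint
in the subtree of `T` rooted at `w`. -/
def bd (G T : SimpleGraph V) (r w : V) : Set V :=
  {x | ∃ y, G.Adj x y ∧
    ((x ∈ subtreeSet T r w ∧ y ∉ subtreeSet T r w) ∨
     (x ∉ subtreeSet T r w ∧ y ∈ subtreeSet T r w))}

lemma not_mem_subtree {T : SimpleGraph V} {r v w : V} (h : w ∉ subtreeSet T r v) :
    ∃ q : T.Walk r w, q.IsPath ∧ v ∉ q.support := by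
  classical
  simp only [subtreeSet, Set.mem_setOf_eq, not_forall] at h
  obtain ⟨q, hq, hv⟩ := h
  exact ⟨q, hq, hv⟩

lemma cross_path_mem {T : SimpleGraph V} {r v u w : V}
    (hu : u ∈ subtreeSet T r v) (hw : w ∉ subtreeSet T r v)
    (p : T.Walk u w) : v ∈ p.support := by
  classical
  by_contra hv
  obtain ⟨q, hq, hqv⟩ := not_mem_subtree hw
  have hb := hu (q.append p.reverse).bypass (SimpleGraph.Walk.bypass_isPath _)
  have hmem := (q.append p.reverse).support_bypass_subset hb
  rw [SimpleGraph.Walk.support_append] at hmem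
  rcases List.mem_append.1 hmem with h | h
  · exact hqv h
  · exact hv (by simpa [SimpleGraph.Walk.support_reverse] using List.mem_of_mem_tail h)

lemma tree_cross_endpoint {T : SimpleGraph V} {r v a b : V}
    (hab : T.Adj a b) (ha : a ∈ subtreeSet T r v) (hb : b ∉ subtreeSet T r v) :
    a = v := by
  classical
  obtain ⟨q, hq, hqv⟩ := not_mem_subtree hb
  have hbp := ha (q.append hab.symm.toWalk).bypass (SimpleGraph.Walk.bypass_isPath _)
  have hmem := (q.append hab.symm.toWalk).support_bypass_subset hbp
  rw [SimpleGraph.Walk.support_append] at hmem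
  rcases List.mem_append.1 hmem with h | h
  · exact absurd h hqv
  · have : v = a := by simpa [SimpleGraph.Adj.toWalk] using h
    exact this.symm

lemma tree_cross_unique {T : SimpleGraph V} (hTree : T.IsTree) {r v w1 w2 : V}
    (h1 : T.Adj v w1) (h2 : T.Adj v w2)
    (hw1 : w1 ∉ subtreeSet T r v) (hw2 : w2 ∉ subtreeSet T r v) : w1 = w2 := by
  classical
  by_contra hne
  obtain ⟨q1, hq1, hv1⟩ := not_mem_subtree hw1
  obtain ⟨q2, hq2, hv2⟩ := not_mem_subtree hw2
  set p1 := (q1.reverse.append q2).bypass with hp1def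
  have hp1 : p1.IsPath := SimpleGraph.Walk.bypass_isPath _
  have hvp1 : v ∉ p1.support := by
    intro h
    have hmem := (q1.reverse.append q2).support_bypass_subset h
    rw [SimpleGraph.Walk.support_append] at hmem
    rcases List.mem_append.1 hmem with h' | h'
    · exact hv1 (by simpa [SimpleGraph.Walk.support_reverse] using h')
    · exact hv2 (List.mem_of_mem_tail h')
  have hvne1 : w1 ≠ v := h1.ne'
  have hvne2 : v ≠ w2 := h2.ne
  let p2 : T.Walk w1 w2 := SimpleGraph.Walk.cons h1.symm h2.toWalk
  have hp2 : p2.IsPath := by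
    simp [p2, SimpleGraph.Walk.isPath_def, SimpleGraph.Adj.toWalk,
      hvne1, hvne2, hne, h2.ne]
  obtain ⟨p, -, hu⟩ := hTree.existsUnique_path w1 w2
  have e1 := hu p1 hp1
  have e2 := hu p2 hp2
  have hvp2 : v ∈ p2.support := by simp [p2, SimpleGraph.Adj.toWalk]
  rw [e2, ← e1] at hvp2
  exact hvp1 hvp2

theorem stmt4 [Fintype V] (G T : SimpleGraph V) (r : V) (k : ℕ)
    (hG : G.Connected) (hT : T ≤ G) (hTree : T.IsTree)
    (hk : lfenWith G T = k) :
    ∀ v : V, (bd G T r v).ncard ≤ 2 * k + 2 := by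
  intro v
  classical
  -- notation
  set S := subtreeSet T r v with hSdef
  -- choose a witness edge for each boundary vertex
  have hwit : ∀ x ∈ bd G T r v, ∃ y, G.Adj x y ∧
      ((x ∈ S ∧ y ∉ S) ∨ (x ∉ S ∧ y ∈ S)) := fun x hx => hx
  let f : V → Sym2 V := fun x =>
    if h : x ∈ bd G T r v then s(x, (hwit x h).choose) else s(x, x)
  have hf : ∀ x (h : x ∈ bd G T r v),
      f x = s(x, (hwit x h).choose) ∧ G.Adj x (hwit x h).choose ∧
      ((x ∈ S ∧ (hwit x h).choose ∉ S) ∨ (x ∉ S ∧ (hwit x h).choose ∈ S)) := by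
    intro x h
    refine ⟨by simp [f, h], (hwit x h).choose_spec.1, (hwit x h).choose_spec.2⟩
  have hfin : (bd G T r v).Finite := Set.toFinite _
  let B : Finset V := hfin.toFinset
  -- fibers of f have size at most 2
  have hcard1 : B.card ≤ 2 * (B.image f).card := by
    refine Finset.card_le_mul_card_image B 2 ?_
    intro e he
    have hsub : B.filter (fun x => f x = e) ⊆
        Sym2.lift ⟨fun a b => {a, b}, fun a b => Finset.pair_comm a b⟩ e := by
      intro x hx
      rw [Finset.mem_filter] at hx
      obtain ⟨hxB, hxe⟩ := hx
      have hxbd : x ∈ bd G T r v := by simpa [B] using hxB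
      obtain ⟨hfx, -, -⟩ := hf x hxbd
      rw [hfx] at hxe
      induction e using Sym2.ind with
      | _ a b =>
        simp only [Sym2.lift_mk]
        have := Sym2.eq_iff.1 hxe
        rcases this with ⟨h1, -⟩ | ⟨h2, -⟩
        · simp [h1]
        · simp [h2]
    calc (B.filter (fun x => f x = e)).card
        ≤ (Sym2.lift ⟨fun a b => {a, b}, fun a b => Finset.pair_comm a b⟩ e).card :=
          Finset.card_le_card hsub
      _ ≤ 2 := by
          induction e using Sym2.ind with
          | _ a b => simpa using Finset.card_insert_le a {b}
  -- the image of f is contained in Eloc ∪ (a subsingleton of tree edges)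
  let Ef : Finset (Sym2 V) := (Set.toFinite (Eloc G T v)).toFinset
  let TF : Finset (Sym2 V) := (B.image f).filter (· ∈ T.edgeSet)
  have himg : B.image f ⊆ Ef ∪ TF := by
    intro e he
    obtain ⟨x, hxB, hfx⟩ := Finset.mem_image.1 he
    have hxbd : x ∈ bd G T r v := by simpa [B] using hxB
    obtain ⟨hfeq, hadj, hcross⟩ := hf x hxbd
    by_cases hTe : e ∈ T.edgeSet
    · exact Finset.mem_union_right _ (Finset.mem_filter.2 ⟨he, hTe⟩)
    · refine Finset.mem_union_left _ ?_
      rw [Set.Finite.mem_toFinset]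
      set y := (hwit x hxbd).choose
      have hGe : e ∈ G.edgeSet := by
        rw [← hfx, hfeq]; exact hadj
      refine ⟨hGe, hTe, ?_⟩
      rcases hcross with ⟨hxS, hyS⟩ | ⟨hxS, hyS⟩
      · exact ⟨x, y, by rw [← hfx, hfeq], fun p _ => cross_path_mem hxS hyS p⟩
      · exact ⟨y, x, by rw [← hfx, hfeq, Sym2.eq_swap],
          fun p _ => cross_path_mem hyS hxS p⟩
  -- the tree-edge part is a subsingleton
  have hTFform : ∀ e ∈ TF, ∃ w, e = s(v, w) ∧ T.Adj v w ∧ w ∉ S := by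
    intro e he
    obtain ⟨he', hTe⟩ := Finset.mem_filter.1 he
    obtain ⟨x, hxB, hfx⟩ := Finset.mem_image.1 he'
    have hxbd : x ∈ bd G T r v := by simpa [B] using hxB
    obtain ⟨hfeq, hadj, hcross⟩ := hf x hxbd
    set y := (hwit x hxbd).choose
    have hTadj : T.Adj x y := by
      rw [← hfx, hfeq] at hTe; exact hTe
    rcases hcross with ⟨hxS, hyS⟩ | ⟨hxS, hyS⟩
    · have hxv : x = v := tree_cross_endpoint hTadj hxS hyS
      exact ⟨y, by rw [← hfx, hfeq, hxv], hxv ▸ hTadj, hyS⟩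
    · have hyv : y = v := tree_cross_endpoint hTadj.symm hyS hxS
      exact ⟨x, by rw [← hfx, hfeq, hyv, Sym2.eq_swap], hyv ▸ hTadj.symm, hxS⟩
  have hTFcard : TF.card ≤ 1 := by
    refine Finset.card_le_one.2 ?_
    intro e1 he1 e2 he2
    obtain ⟨w1, hw1e, hw1a, hw1S⟩ := hTFform e1 he1
    obtain ⟨w2, hw2e, hw2a, hw2S⟩ := hTFform e2 he2
    rw [hw1e, hw2e, tree_cross_unique hTree hw1a hw2a hw1S hw2S]
  have hEfcard : Ef.card ≤ k := by
    have h0 : lfenWith G T = Finset.univ.sup fun u => (Eloc G T u).ncard := rfl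
    have : (Eloc G T v).ncard ≤ Finset.univ.sup fun u => (Eloc G T u).ncard :=
      Finset.le_sup (f := fun u => (Eloc G T u).ncard) (Finset.mem_univ v)
    rw [← h0, hk] at this
    rwa [Set.ncard_eq_toFinset_card _ (Set.toFinite (Eloc G T v))] at this
  have hncard : (bd G T r v).ncard = B.card :=
    Set.ncard_eq_toFinset_card _ hfin
  calc (bd G T r v).ncard = B.card := hncard
    _ ≤ 2 * (B.image f).card := hcard1
    _ ≤ 2 * (Ef ∪ TF).card := by
        have := Finset.card_le_card himg
        omega
    _ ≤ 2 * (Ef.card + TF.card) := by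
        have := Finset.card_union_le Ef TF
        omega
    _ ≤ 2 * (k + 1) := by omega
    _ = 2 * k + 2 := by ring
end

section
/- Let G be a connected graph and T a rooted spanning tree of G with lfen(G,T) = k. Then every vertex v of G has at most 2k open children in T, where a child w of v is open if there is more than one edge of G between V_w and V \ V_w. -/
open SimpleGraph

variable {V : Type*}

/-- `w` is a child of `v` in the tree `T` rooted at `r`. -/
def IsChild (T : SimpleGraph V) (r v w : V) : Prop :=
  T.Adj v w ∧ v ∉ subtreeSet T r w

/-- Edges of `G` with exactly one endpoint in the subtree rooted at `w`. -/
def crossEdges (G T : SimpleGraph V) (r w : V) : Set (Sym2 V) :=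
  {e | e ∈ G.edgeSet ∧
    ∃ x y : V, e = s(x, y) ∧ x ∈ subtreeSet T r w ∧ y ∉ subtreeSet T r w}

/-- A child `w` of `v` is open if there are at least two edges of `G`
between the subtree rooted at `w` and its complement. -/
def IsOpenChild (G T : SimpleGraph V) [Fintype V] (r v w : V) : Prop :=
  IsChild T r v w ∧ 2 ≤ (crossEdges G T r w).ncard

section TreeAux

variable [DecidableEq V] {T : SimpleGraph V}

/-- The unique path between two vertices in a tree. -/
noncomputable def pth (hT : T.IsTree) (a b : V) : T.Walk a b :=
  (hT.existsUnique_path a b).choose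

set_option linter.unusedSectionVars false

variable (hT : T.IsTree)
include hT

lemma pth_isPath (a b : V) : (pth hT a b).IsPath :=
  (hT.existsUnique_path a b).choose_spec.1

lemma pth_unique {a b : V} {p : T.Walk a b} (hp : p.IsPath) : p = pth hT a b :=
  (hT.existsUnique_path a b).choose_spec.2 p hp

lemma mem_pth_symm {a b c : V} (h : c ∈ (pth hT a b).support) :
    c ∈ (pth hT b a).support := by
  have hrev : (pth hT a b).reverse = pth hT b a := pth_unique hT ((pth_isPath hT a b).reverse)
  rw [← hrev, Walk.support_reverse, List.mem_reverse]
  exact h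

lemma mem_subtree_iff {r w u : V} : u ∈ subtreeSet T r w ↔ w ∈ (pth hT r u).support := by
  constructor
  · intro h; exact h (pth hT r u) (pth_isPath hT r u)
  · intro h p hp; exact (pth_unique hT hp).symm ▸ h

set_option linter.unusedSectionVars false in
omit hT in
lemma self_mem_subtree {r w : V} : w ∈ subtreeSet T r w :=
  fun p _ => p.end_mem_support

lemma mem_pth_trans {a b c d : V} (h : c ∈ (pth hT a b).support) :
    c ∈ (pth hT a d).support ∨ c ∈ (pth hT d b).support := by
  have hb : ((pth hT a d).append (pth hT d b)).bypass = pth hT a b :=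
    pth_unique hT (Walk.bypass_isPath _)
  rw [← hb] at h
  have h2 := Walk.support_bypass_subset _ h
  rcases (Walk.mem_support_append_iff _ _).1 h2 with h1 | h1
  · exact Or.inl h1
  · exact Or.inr h1

lemma support_pth_prefix {a b c : V} (h : c ∈ (pth hT a b).support) :
    (pth hT a c).support ⊆ (pth hT a b).support := by
  have h1 : (pth hT a b).takeUntil c h = pth hT a c :=
    pth_unique hT ((pth_isPath hT a b).takeUntil h)
  rw [← h1]
  exact Walk.support_takeUntil_subset _ h

lemma parent_unique {r w u u' : V} (hu : T.Adj w u) (hu' : T.Adj w u')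
    (h : w ∉ (pth hT r u).support) (h' : w ∉ (pth hT r u').support) : u = u' := by
  have hc1 : (Walk.cons hu (pth hT u r)).IsPath := by
    rw [Walk.cons_isPath_iff]
    exact ⟨pth_isPath hT u r, fun hw => h (mem_pth_symm hT hw)⟩
  have hc2 : (Walk.cons hu' (pth hT u' r)).IsPath := by
    rw [Walk.cons_isPath_iff]
    exact ⟨pth_isPath hT u' r, fun hw => h' (mem_pth_symm hT hw)⟩
  have e1 : Walk.cons hu (pth hT u r) = pth hT w r := pth_unique hT hc1
  have e2 : Walk.cons hu' (pth hT u' r) = pth hT w r := pth_unique hT hc2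
  have h3 := congrArg Walk.support (e1.trans e2.symm)
  rw [Walk.support_cons, Walk.support_cons, (pth hT u r).support_eq_cons,
    (pth hT u' r).support_eq_cons] at h3
  exact (List.cons_eq_cons.1 ((List.cons_eq_cons.1 h3).2)).1

/-- C1 : the root of the subtree lies on any crossing path. -/
lemma mem_pth_of_crossing {r w x y : V} (hx : x ∈ subtreeSet T r w)
    (hy : y ∉ subtreeSet T r w) : w ∈ (pth hT x y).support := by
  have hx' : w ∈ (pth hT r x).support := (mem_subtree_iff hT).1 hx
  have hy' : w ∉ (pth hT r y).support := fun h => hy ((mem_subtree_iff hT).2 h)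
  rcases mem_pth_trans hT (d := y) hx' with h | h
  · exact absurd h hy'
  · exact mem_pth_symm hT h

/-- C2 : the parent lies on any crossing path. -/
lemma parent_mem_pth {r v w x y : V} (hvw : T.Adj v w) (hv : v ∉ subtreeSet T r w)
    (hx : x ∈ subtreeSet T r w) (hy : y ∉ subtreeSet T r w) :
    v ∈ (pth hT x y).support := by
  have hw : w ∈ (pth hT x y).support := mem_pth_of_crossing hT hx hy
  have hq : ((pth hT x y).dropUntil w hw).IsPath := (pth_isPath hT x y).dropUntil hw
  have hwy : w ≠ y := by rintro rfl; exact hy (self_mem_subtree)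
  obtain ⟨u, hadj, q', hq'⟩ := Walk.exists_eq_cons_of_ne hwy ((pth hT x y).dropUntil w hw)
  rw [hq', Walk.cons_isPath_iff] at hq
  have hq'path : q' = pth hT u y := pth_unique hT hq.1
  have hu : u ∉ subtreeSet T r w := by
    intro huS
    have h2 := mem_pth_of_crossing hT huS hy
    rw [← hq'path] at h2
    exact hq.2 h2
  have huv : u = v := parent_unique hT hadj hvw.symm
    (fun h => hu ((mem_subtree_iff hT).2 h)) (fun h => hv ((mem_subtree_iff hT).2 h))
  have hvmem : v ∈ ((pth hT x y).dropUntil w hw).support := by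
    rw [hq', Walk.support_cons]
    exact List.mem_cons_of_mem _ (huv ▸ q'.start_mem_support)
  exact Walk.support_dropUntil_subset _ hw hvmem

/-- The subtrees of two distinct children of `v` are disjoint. -/
lemma subtree_disjoint {r v w1 w2 x : V} (h12 : w1 ≠ w2)
    (h1 : T.Adj v w1) (hv1 : v ∉ subtreeSet T r w1)
    (h2 : T.Adj v w2) (hv2 : v ∉ subtreeSet T r w2)
    (hx1 : x ∈ subtreeSet T r w1) (hx2 : x ∈ subtreeSet T r w2) : False := by
  -- the parent edge structure at w1
  have hc1 : (Walk.cons h1.symm (pth hT v r)).IsPath := by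
    rw [Walk.cons_isPath_iff]
    exact ⟨pth_isPath hT v r,
      fun hw => hv1 ((mem_subtree_iff hT).2 (mem_pth_symm hT hw))⟩
  have e1 : Walk.cons h1.symm (pth hT v r) = pth hT w1 r := pth_unique hT hc1
  -- v lies on pth r w1
  have hvrw1 : v ∈ (pth hT r w1).support := by
    apply mem_pth_symm hT
    rw [← e1, Walk.support_cons]
    exact List.mem_cons_of_mem _ (pth hT v r).start_mem_support
  -- split pth r x at w1
  have hw1x : w1 ∈ (pth hT r x).support := (mem_subtree_iff hT).1 hx1
  have hA : (pth hT r x).takeUntil w1 hw1x = pth hT r w1 :=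
    pth_unique hT ((pth_isPath hT r x).takeUntil hw1x)
  have hB : (pth hT r x).dropUntil w1 hw1x = pth hT w1 x :=
    pth_unique hT ((pth_isPath hT r x).dropUntil hw1x)
  -- v is not on pth w1 x
  have hnodup := (pth_isPath hT r x).support_nodup
  have hspec := (pth hT r x).take_spec hw1x
  have hsupp : ((pth hT r x).takeUntil w1 hw1x).support ++
      ((pth hT r x).dropUntil w1 hw1x).support.tail = (pth hT r x).support := by
    rw [← Walk.support_append, hspec]
  rw [← hsupp] at hnodup
  have hdisj := List.disjoint_of_nodup_append hnodup
  have hvA : v ∈ ((pth hT r x).takeUntil w1 hw1x).support := by rw [hA]; exact hvrw1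
  have hvnotB : v ∉ (pth hT w1 x).support := by
    rw [(pth hT w1 x).support_eq_cons]
    intro hmem
    rcases List.mem_cons.1 hmem with h | h
    · exact h1.ne h
    · refine hdisj hvA ?_
      rw [hB]
      exact h
  -- w1 is not in subtree of w2
  have hw1n2 : w1 ∉ subtreeSet T r w2 := by
    intro hmem
    have hw2 : w2 ∈ (pth hT w1 r).support := mem_pth_symm hT ((mem_subtree_iff hT).1 hmem)
    rw [← e1, Walk.support_cons] at hw2
    rcases List.mem_cons.1 hw2 with h | h
    · exact h12 h.symm
    · exact hv2 ((mem_subtree_iff hT).2 (mem_pth_symm hT h))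
  -- contradiction with C2
  have := parent_mem_pth hT h2 hv2 hx2 hw1n2
  exact hvnotB (mem_pth_symm hT this)

/-- A tree edge crossing the subtree boundary must be the parent edge. -/
lemma cross_tree_edge {r v w x y : V} (hvw : T.Adj v w) (hv : v ∉ subtreeSet T r w)
    (hxy : T.Adj x y) (hx : x ∈ subtreeSet T r w) (hy : y ∉ subtreeSet T r w) :
    x = w ∧ y = v := by
  have hxny : x ∉ (pth hT r y).support := by
    intro hmem
    have hsub := support_pth_prefix hT hmem
    have hwx : w ∈ (pth hT r x).support := (mem_subtree_iff hT).1 hx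
    exact (fun h => hy ((mem_subtree_iff hT).2 h)) (hsub hwx)
  have hcons : (Walk.cons hxy (pth hT y r)).IsPath := by
    rw [Walk.cons_isPath_iff]
    exact ⟨pth_isPath hT y r, fun h => hxny (mem_pth_symm hT h)⟩
  have e1 : Walk.cons hxy (pth hT y r) = pth hT x r := pth_unique hT hcons
  have hwx : w ∈ (pth hT x r).support := mem_pth_symm hT ((mem_subtree_iff hT).1 hx)
  rw [← e1, Walk.support_cons] at hwx
  have hwy' : w ∉ (pth hT y r).support :=
    fun h => hy ((mem_subtree_iff hT).2 (mem_pth_symm hT h))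
  have hxw : x = w := by
    rcases List.mem_cons.1 hwx with h | h
    · exact h.symm
    · exact absurd h hwy'
  subst hxw
  refine ⟨rfl, ?_⟩
  exact parent_unique hT hxy hvw.symm
    (fun h => hy ((mem_subtree_iff hT).2 h)) (fun h => hv ((mem_subtree_iff hT).2 h))

end TreeAux

theorem stmt5 [Fintype V] (G T : SimpleGraph V) (r : V) (k : ℕ)
    (hG : G.Connected) (hT : T ≤ G) (hTree : T.IsTree)
    (hk : lfenWith G T = k) :
    ∀ v : V, {w : V | IsOpenChild G T r v w}.ncard ≤ 2 * k := by
  classical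
  intro v
  subst hk
  -- each open child yields a non-tree crossing edge in Eloc v
  have key : ∀ w, IsOpenChild G T r v w → ∃ p : V × V,
      s(p.1, p.2) ∈ Eloc G T v ∧ p.1 ∈ subtreeSet T r w ∧ p.2 ∉ subtreeSet T r w := by
    intro w hw
    obtain ⟨⟨hadj, hv⟩, hcard⟩ := hw
    obtain ⟨e, heC, hene⟩ := Set.exists_ne_of_one_lt_ncard
      (s := crossEdges G T r w) (by omega) s(v, w)
    obtain ⟨heG, x, y, rfl, hx, hy⟩ := heC
    refine ⟨(x, y), ⟨heG, ?_, x, y, rfl, ?_⟩, hx, hy⟩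
    · intro heT
      rw [SimpleGraph.mem_edgeSet] at heT
      obtain ⟨hxw, hyv⟩ := cross_tree_edge hTree hadj hv heT hx hy
      subst hxw; subst hyv
      exact hene Sym2.eq_swap
    · intro p hp
      rw [pth_unique hTree hp]
      exact parent_mem_pth hTree hadj hv hx hy
  choose! f hf1 hf2 hf3 using key
  have step1 : {w | IsOpenChild G T r v w}.ncard ≤
      {p : V × V | s(p.1, p.2) ∈ Eloc G T v}.ncard := by
    apply Set.ncard_le_ncard_of_injOn f
    · intro w hw; exact hf1 w hw
    · intro w1 hw1 w2 hw2 heq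
      by_contra hne
      have hx2 : (f w1).1 ∈ subtreeSet T r w2 := by rw [heq]; exact hf2 w2 hw2
      exact subtree_disjoint hTree hne hw1.1.1 hw1.1.2 hw2.1.1 hw2.1.2 (hf2 w1 hw1) hx2
  have step2 : {p : V × V | s(p.1, p.2) ∈ Eloc G T v}.ncard ≤ 2 * (Eloc G T v).ncard := by
    have hrep : ∀ e : Sym2 V, ∃ p : V × V, e = s(p.1, p.2) := by
      intro e
      induction e using Sym2.ind with
      | _ x y => exact ⟨(x, y), rfl⟩
    choose g hg using hrep
    have hsub : {p : V × V | s(p.1, p.2) ∈ Eloc G T v} ⊆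
        g '' (Eloc G T v) ∪ (Prod.swap ∘ g) '' (Eloc G T v) := by
      rintro ⟨x, y⟩ hp
      simp only [Set.mem_setOf_eq] at hp
      have h2 := hg s(x, y)
      rw [Sym2.eq_iff] at h2
      rcases h2 with ⟨ha, hb⟩ | ⟨ha, hb⟩
      · exact Or.inl ⟨s(x, y), hp, by ext <;> simp [← ha, ← hb]⟩
      · exact Or.inr ⟨s(x, y), hp, by ext <;> simp [← ha, ← hb]⟩
    calc {p : V × V | s(p.1, p.2) ∈ Eloc G T v}.ncard
        ≤ (g '' (Eloc G T v) ∪ (Prod.swap ∘ g) '' (Eloc G T v)).ncard :=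
          Set.ncard_le_ncard hsub (Set.toFinite _)
      _ ≤ (g '' (Eloc G T v)).ncard + ((Prod.swap ∘ g) '' (Eloc G T v)).ncard :=
          Set.ncard_union_le _ _
      _ ≤ (Eloc G T v).ncard + (Eloc G T v).ncard := by
          gcongr <;> exact Set.ncard_image_le (Set.toFinite _)
      _ = 2 * (Eloc G T v).ncard := by ring
  have step3 : (Eloc G T v).ncard ≤ lfenWith G T :=
    Finset.le_sup (f := fun v => (Eloc G T v).ncard) (Finset.mem_univ v)
  omega
end

section
/- Let G be a connected graph, T a rooted spanning tree of G, v a vertex with open children v₁,…,v_t in T. Then the boundary of v satisfies δ(v) ⊆ δ(v₁) ∪ … ∪ δ(v_t) ∪ {v} ∪ N_G(v). -/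
/-!
A boundary vertex `x ∉ N_G(v) ∪ {v}` is an endpoint of an edge `xy` leaving `V_v` with neither
endpoint equal to `v`. The endpoint inside `V_v` lies in `V_w` for a child `w` of `v`, and `xy`
also leaves `V_w ⊆ V_v`. Since `xy` differs from the tree edge `wv`, which leaves `V_w` too,
the child `w` is open and `x ∈ δ(w)`.
-/

open SimpleGraph

variable {V : Type*}

lemma mem_subtreeSet_self (T : SimpleGraph V) (r v : V) : v ∈ subtreeSet T r v :=
  fun p _ => p.end_mem_support

lemma IsChild.subtreeSet_subset {T : SimpleGraph V} (hT : T.IsAcyclic) {r v w : V}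
    (h : IsChild T r v w) : subtreeSet T r w ⊆ subtreeSet T r v := by
  classical
  obtain ⟨hvw, hv⟩ := h
  simp only [subtreeSet, Set.mem_ofPred_eq, not_forall] at hv
  obtain ⟨p₀, hp₀, hw₀⟩ := hv
  intro u hu p hp
  have hwp : w ∈ p.support := hu p hp
  exact p.support_takeUntil_subset_support hwp <|
    hT.mem_support_of_ne_mem_support_of_adj_of_isPath (hp.takeUntil hwp) hp₀ hvw.symm hw₀

/-- The child is the successor of `v` on the path from `r` to `x`. -/
lemma exists_isChild_mem_subtreeSet {T : SimpleGraph V} (hT : T.IsTree) {r v x : V}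
    (hx : x ∈ subtreeSet T r v) (hxv : x ≠ v) :
    ∃ w, IsChild T r v w ∧ x ∈ subtreeSet T r w := by
  classical
  obtain ⟨p, hp, -⟩ := hT.existsUnique_path r x
  have hvp : v ∈ p.support := hx p hp
  cases hdrop : p.dropUntil v hvp with
  | nil => exact absurd rfl hxv
  | @cons _ w _ hvw q =>
    refine ⟨w, ⟨hvw, ?_⟩, ?_⟩
    · have hnd := hp.support_nodup
      rw [← p.take_spec hvp, Walk.support_append, List.nodup_append] at hnd
      simp only [subtreeSet, Set.mem_ofPred_eq, not_forall]
      exact ⟨p.takeUntil v hvp, hp.takeUntil hvp,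
        fun hw => hnd.2.2 w hw w (by simp [hdrop]) rfl⟩
    · intro p' hp'
      rw [Subtype.mk.inj <| (hT.isAcyclic.subsingleton_path r x).elim ⟨p', hp'⟩ ⟨p, hp⟩]
      exact p.support_dropUntil_subset_support hvp (by simp [hdrop])

/-- Besides the tree edge `w v`, a second cross edge makes the child `w` open. -/
lemma IsChild.isOpenChild [Fintype V] {G T : SimpleGraph V} (hTG : T ≤ G) {r v w a b : V}
    (hw : IsChild T r v w) (hab : G.Adj a b) (ha : a ∈ subtreeSet T r w)
    (hb : b ∉ subtreeSet T r w) (hbv : b ≠ v) : IsOpenChild G T r v w := by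
  have hab' : s(a, b) ∈ crossEdges G T r w := ⟨hab, a, b, rfl, ha, hb⟩
  have hwv : s(w, v) ∈ crossEdges G T r w :=
    ⟨hTG hw.1.symm, w, v, rfl, mem_subtreeSet_self T r w, hw.2⟩
  have hne : s(a, b) ≠ s(w, v) := by
    intro h
    rcases Sym2.eq_iff.1 h with ⟨-, hbv'⟩ | ⟨hav, -⟩
    · exact hbv hbv'
    · exact hw.2 (hav ▸ ha)
  exact ⟨hw, (Set.one_lt_ncard (Set.toFinite _)).2 ⟨_, hab', _, hwv, hne⟩⟩

lemma exists_isOpenChild_of_adj [Fintype V] {G T : SimpleGraph V} (hTG : T ≤ G)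
    (hT : T.IsTree) {r v a b : V} (hab : G.Adj a b) (ha : a ∈ subtreeSet T r v) (hav : a ≠ v)
    (hb : b ∉ subtreeSet T r v) :
    ∃ w, IsOpenChild G T r v w ∧ a ∈ subtreeSet T r w ∧ b ∉ subtreeSet T r w := by
  obtain ⟨w, hw, haw⟩ := exists_isChild_mem_subtreeSet hT ha hav
  have hbw : b ∉ subtreeSet T r w := fun h => hb (hw.subtreeSet_subset hT.isAcyclic h)
  have hbv : b ≠ v := by rintro rfl; exact hb (mem_subtreeSet_self T r b)
  exact ⟨w, hw.isOpenChild hTG hab haw hbw hbv, haw, hbw⟩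

theorem stmt6_general [Fintype V] (G T : SimpleGraph V) (r : V)
    (hT : T ≤ G) (hTree : T.IsTree) (v : V) :
    bd G T r v ⊆
      (⋃ w ∈ {w : V | IsOpenChild G T r v w}, bd G T r w) ∪ {v} ∪ G.neighborSet v := by
  rintro x ⟨y, hxy, hcross⟩
  by_cases hxv : x = v
  · exact Or.inl (Or.inr hxv)
  by_cases hvx : G.Adj v x
  · exact Or.inr hvx
  refine Or.inl (Or.inl ?_)
  rcases hcross with ⟨hx, hy⟩ | ⟨hx, hy⟩
  · obtain ⟨w, hw, hxw, hyw⟩ := exists_isOpenChild_of_adj hT hTree hxy hx hxv hy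
    exact Set.mem_biUnion hw ⟨y, hxy, Or.inl ⟨hxw, hyw⟩⟩
  · have hyv : y ≠ v := by rintro rfl; exact hvx hxy.symm
    obtain ⟨w, hw, hyw, hxw⟩ := exists_isOpenChild_of_adj hT hTree hxy.symm hy hyv hx
    exact Set.mem_biUnion hw ⟨y, hxy, Or.inr ⟨hxw, hyw⟩⟩

theorem stmt6 [Fintype V] (G T : SimpleGraph V) (r : V)
    (hG : G.Connected) (hT : T ≤ G) (hTree : T.IsTree) (v : V) :
    bd G T r v ⊆
      (⋃ w ∈ {w : V | IsOpenChild G T r v w}, bd G T r w) ∪ {v} ∪ G.neighborSet v :=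
  stmt6_general G T r hT hTree v
end

section
/- Let D be a digraph and m ≤ |A(D)| an integer. Define a BNSL instance over vertex set V(D) with additive local score functions given by f_y(x) = 1 if xy ∈ A(D) and f_y(x) = 0 otherwise, where the score of a DAG D' on V(D) is the sum over arcs ab of D' of f_b(a). Then there exists a feedback arc set of D of size at most m if and only if there exists a DAG D' on V(D) achieving score at least |A(D)| − m. -/
/-!
Deleting a feedback arc set `A'` from `D` leaves a DAG whose score is `|A(D) \ A'| ≥ |A(D)| - m`.
Conversely, the arcs of `D` missing from a DAG `B` form a feedback arc set, since every arc
that survives their deletion lies in `B`; its size is `|A(D)|` minus the score of `B`.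
-/

open Relation

theorem irreflexive_transGen_of_le {α : Type*} {r s : α → α → Prop} (h : r ≤ s)
    (hs : Irreflexive (TransGen s)) : Irreflexive (TransGen r) :=
  fun x hx => hs x (TransGen.mono h x x hx)

section FeedbackArcSet

variable {V : Type*} [Finite V] {A : V → V → Prop} {m : ℕ}

theorem exists_dag_score_ge_of_feedbackArcSet {A' : Set (V × V)}
    (hA' : A' ⊆ {p : V × V | A p.1 p.2}) (hcard : A'.ncard ≤ m)
    (hacyc : Irreflexive (TransGen fun x y => A x y ∧ (x, y) ∉ A')) :
    ∃ B : V → V → Prop, Irreflexive (TransGen B) ∧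
      {p : V × V | A p.1 p.2}.ncard - m ≤ {p : V × V | B p.1 p.2 ∧ A p.1 p.2}.ncard := by
  refine ⟨fun x y => A x y ∧ (x, y) ∉ A', hacyc, ?_⟩
  calc {p : V × V | A p.1 p.2}.ncard - m
      ≤ {p : V × V | A p.1 p.2}.ncard - A'.ncard := Nat.sub_le_sub_left hcard _
    _ = ({p : V × V | A p.1 p.2} \ A').ncard := (Set.ncard_sdiff hA').symm
    _ ≤ {p : V × V | (A p.1 p.2 ∧ (p.1, p.2) ∉ A') ∧ A p.1 p.2}.ncard :=
      Set.ncard_le_ncard fun p hp => ⟨hp, hp.1⟩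

theorem exists_feedbackArcSet_of_dag_score_ge {B : V → V → Prop}
    (hacyc : Irreflexive (TransGen B))
    (hscore : {p : V × V | A p.1 p.2}.ncard - m ≤
      {p : V × V | B p.1 p.2 ∧ A p.1 p.2}.ncard) :
    ∃ A' : Set (V × V), A' ⊆ {p : V × V | A p.1 p.2} ∧ A'.ncard ≤ m ∧
      Irreflexive (TransGen fun x y => A x y ∧ (x, y) ∉ A') := by
  set S := {p : V × V | A p.1 p.2}
  set SB := {p : V × V | B p.1 p.2}
  refine ⟨S \ SB, Set.sdiff_subset, ?_, ?_⟩
  · have hsplit := Set.ncard_inter_add_ncard_sdiff_eq_ncard S SB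
    have hscore_le : {p : V × V | B p.1 p.2 ∧ A p.1 p.2}.ncard ≤ (S ∩ SB).ncard :=
      Set.ncard_le_ncard fun p hp => ⟨hp.2, hp.1⟩
    omega
  · exact irreflexive_transGen_of_le (fun x y hxy => of_not_not fun hB => hxy.2 ⟨hxy.1, hB⟩)
      hacyc

end FeedbackArcSet

theorem stmt7_general {V : Type*} [Fintype V] (A : V → V → Prop) (m : ℕ) :
    (∃ A' : Set (V × V), A' ⊆ {p : V × V | A p.1 p.2} ∧ A'.ncard ≤ m ∧
        Irreflexive (Relation.TransGen fun x y => A x y ∧ (x, y) ∉ A')) ↔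
      (∃ B : V → V → Prop, Irreflexive (Relation.TransGen B) ∧
        {p : V × V | A p.1 p.2}.ncard - m ≤
          {p : V × V | B p.1 p.2 ∧ A p.1 p.2}.ncard) :=
  ⟨fun ⟨_, hA', hcard, hacyc⟩ => exists_dag_score_ge_of_feedbackArcSet hA' hcard hacyc,
    fun ⟨_, hacyc, hscore⟩ => exists_feedbackArcSet_of_dag_score_ge hacyc hscore⟩

/-- reduction from Minimum Feedback Arc Set to additive BNSL.
`A` is the arc relation of the digraph `D`; the additive scores are
`f_y(x) = 1` iff `xy` is an arc of `D`, so the score of a DAG `B` is the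
number of arcs of `B` that are also arcs of `D`. -/
theorem stmt7 {V : Type*} [Fintype V] (A : V → V → Prop) (m : ℕ)
    (hm : m ≤ {p : V × V | A p.1 p.2}.ncard) :
    (∃ A' : Set (V × V), A' ⊆ {p : V × V | A p.1 p.2} ∧ A'.ncard ≤ m ∧
        Irreflexive (Relation.TransGen fun x y => A x y ∧ (x, y) ∉ A')) ↔
      (∃ B : V → V → Prop, Irreflexive (Relation.TransGen B) ∧
        {p : V × V | A p.1 p.2}.ncard - m ≤
          {p : V × V | B p.1 p.2 ∧ A p.1 p.2}.ncard) :=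
  stmt7_general A m
end

section
/- Let G = (V,E) be a connected graph whose superstructure corresponds to an additive PL instance with per-arc scores f: for every directed DAG D on V whose skeleton is a forest (a polytree), the score Σ_{ab∈A(D)} f_b(a) is at most Σ_{e={a,b} ∈ E(T*)} max(f_a(b), f_b(a)), where T* is a maximum spanning tree of G with edge weights w({a,b}) = max(f_a(b), f_b(a)); moreover this bound is attained by some polytree. -/
/-!
Arcs of a polytree outside `G` score nothing, and an arc `ab` inside `G` scores `f b a ≤ w s(a, b)`.
So the score of a polytree is at most the `w`-weight of its skeleton restricted to `G`; that is a
forest in the connected graph `G`, hence lies in a spanning tree, whose weight is at most that of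
`Tstar`. Conversely, orienting every edge of `Tstar` towards the endpoint that scores it higher
gives a polytree whose score is exactly the weight of `Tstar`.
-/

open SimpleGraph

/-- Total weight of (the edges of) a graph. -/
noncomputable def treeWeight {V : Type*} (T : SimpleGraph V) (w : Sym2 V → ℕ) : ℕ :=
  ∑ᶠ e ∈ T.edgeSet, w e

/-- Score of the polytree with arc relation `B`: the sum over arcs `ab`
of the per-arc score `f b a` (the score of `b` for taking `a` as a parent). -/
noncomputable def polyScore {V : Type*} (B : V → V → Prop) (f : V → V → ℕ) : ℕ :=
  ∑ᶠ p ∈ {p : V × V | B p.1 p.2}, f p.2 p.1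

theorem finsum_mem_le_finsum_mem_of_subset {α M : Type*} [Finite α] [AddCommMonoid M]
    [PartialOrder M] [IsOrderedAddMonoid M] [CanonicallyOrderedAdd M] {s t : Set α}
    {f g : α → M} (hst : s ⊆ t) (hfg : ∀ x ∈ s, f x ≤ g x) :
    ∑ᶠ x ∈ s, f x ≤ ∑ᶠ x ∈ t, g x := by
  rw [finsum_mem_def, finsum_mem_def]
  refine finsum_le_finsum' (Set.toFinite _) (Set.toFinite _) fun x => ?_
  by_cases hx : x ∈ s
  · simpa [hx, hst hx] using hfg x hx
  · simp [hx]

section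

variable {V : Type*}

theorem SimpleGraph.fromRel_mono {r s : V → V → Prop} (h : ∀ a b, r a b → s a b) :
    fromRel r ≤ fromRel s := fun a b hab => by
  rw [fromRel_adj] at hab ⊢
  exact ⟨hab.1, hab.2.imp (h a b) (h b a)⟩

theorem treeWeight_mono [Finite V] {F T : SimpleGraph V} (h : F ≤ T) (w : Sym2 V → ℕ) :
    treeWeight F w ≤ treeWeight T w :=
  finsum_mem_le_finsum_mem_of_subset (edgeSet_mono h) fun _ _ => le_rfl

theorem SimpleGraph.edgeSet_fromRel_of_asymm {B : V → V → Prop} (hB : ∀ a b, B a b → ¬ B b a) :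
    (fromRel B).edgeSet = (fun p : V × V => s(p.1, p.2)) '' {p | B p.1 p.2} := by
  ext e
  induction e with
  | _ x y =>
    simp only [mem_edgeSet, fromRel_adj, Set.mem_image, Set.mem_ofPred_eq, Prod.exists,
      Sym2.eq_iff]
    constructor
    · rintro ⟨-, hxy | hyx⟩
      · exact ⟨x, y, hxy, .inl ⟨rfl, rfl⟩⟩
      · exact ⟨y, x, hyx, .inr ⟨rfl, rfl⟩⟩
    · rintro ⟨a, b, hab, ⟨rfl, rfl⟩ | ⟨rfl, rfl⟩⟩
      · exact ⟨fun h => hB a b hab (h ▸ hab), .inl hab⟩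
      · exact ⟨fun h => hB a b hab (h ▸ hab), .inr hab⟩

theorem treeWeight_fromRel_eq_finsum {B : V → V → Prop} (hB : ∀ a b, B a b → ¬ B b a)
    (w : Sym2 V → ℕ) :
    treeWeight (fromRel B) w = ∑ᶠ p ∈ {p : V × V | B p.1 p.2}, w s(p.1, p.2) := by
  rw [treeWeight, edgeSet_fromRel_of_asymm hB]
  refine finsum_mem_image ?_
  rintro ⟨a, b⟩ hab ⟨c, d⟩ hcd h
  rcases Sym2.eq_iff.1 h with ⟨rfl, rfl⟩ | ⟨rfl, rfl⟩
  · rfl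
  · exact absurd hcd (hB a b hab)

theorem polyScore_le_treeWeight_fromRel [Finite V] {B : V → V → Prop}
    (hB : ∀ a b, B a b → ¬ B b a) {f : V → V → ℕ} {w : Sym2 V → ℕ}
    (hfw : ∀ a b, B a b → f b a ≤ w s(a, b)) :
    polyScore B f ≤ treeWeight (fromRel B) w := by
  rw [treeWeight_fromRel_eq_finsum hB]
  exact finsum_mem_le_finsum_mem_of_subset subset_rfl fun p hp => hfw p.1 p.2 hp

theorem polyScore_eq_treeWeight_fromRel {B : V → V → Prop}
    (hB : ∀ a b, B a b → ¬ B b a) {f : V → V → ℕ} {w : Sym2 V → ℕ}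
    (hfw : ∀ a b, B a b → f b a = w s(a, b)) :
    polyScore B f = treeWeight (fromRel B) w := by
  rw [treeWeight_fromRel_eq_finsum hB]
  exact finsum_mem_congr rfl fun p hp => hfw p.1 p.2 hp

theorem polyScore_and_adj {G : SimpleGraph V} {f : V → V → ℕ}
    (hf : ∀ a b, ¬ G.Adj a b → f b a = 0) (B : V → V → Prop) :
    polyScore (fun a b => B a b ∧ G.Adj a b) f = polyScore B f := by
  refine finsum_mem_inter_support_eq' _ _ _ fun p hp => ?_
  have hadj : G.Adj p.1 p.2 := by_contra fun h => hp (hf p.1 p.2 h)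
  simp [hadj]

theorem SimpleGraph.exists_asymm_fromRel_eq (H : SimpleGraph V) (f : V → V → ℕ) :
    ∃ B : V → V → Prop, (∀ a b, B a b → ¬ B b a) ∧ fromRel B = H ∧
      ∀ a b, B a b → f a b ≤ f b a := by
  let r : V → V → Prop := WellOrderingRel
  refine ⟨fun a b => H.Adj a b ∧ (f a b < f b a ∨ f a b = f b a ∧ r a b), ?_, ?_, ?_⟩
  · rintro a b ⟨-, hab⟩ ⟨-, hba⟩
    rcases hab with hab | ⟨hab, rab⟩ <;> rcases hba with hba | ⟨hba, rba⟩
    all_goals first | omega | exact asymm rab rba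
  · ext a b
    simp only [fromRel_adj]
    constructor
    · rintro ⟨-, ⟨h, -⟩ | ⟨h, -⟩⟩
      exacts [h, h.symm]
    · intro h
      refine ⟨h.ne, ?_⟩
      rcases lt_trichotomy (f a b) (f b a) with hlt | heq | hgt
      · exact .inl ⟨h, .inl hlt⟩
      · rcases trichotomous_of r a b with rab | rfl | rba
        · exact .inl ⟨h, .inr ⟨heq, rab⟩⟩
        · exact (h.ne rfl).elim
        · exact .inr ⟨h.symm, .inr ⟨heq.symm, rba⟩⟩
      · exact .inr ⟨h.symm, .inl hgt⟩
  · rintro a b ⟨-, hab | ⟨hab, -⟩⟩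
    exacts [hab.le, hab.le]

end

theorem stmt9_general {V : Type*} [Fintype V] (G : SimpleGraph V) (f : V → V → ℕ)
    (hG : G.Connected)
    (hf : ∀ a b : V, ¬ G.Adj a b → f b a = 0)
    (w : Sym2 V → ℕ)
    (hw : ∀ a b : V, w (s(a, b)) = max (f a b) (f b a))
    (Tstar : SimpleGraph V) (hTree : Tstar.IsTree)
    (hmax : ∀ T : SimpleGraph V, T ≤ G → T.IsTree →
      treeWeight T w ≤ treeWeight Tstar w) :
    (∀ B : V → V → Prop, (∀ a b, B a b → ¬ B b a) →
        (SimpleGraph.fromRel B).IsAcyclic →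
        polyScore B f ≤ treeWeight Tstar w) ∧
      ∃ B : V → V → Prop, (∀ a b, B a b → ¬ B b a) ∧
        (SimpleGraph.fromRel B).IsAcyclic ∧
        polyScore B f = treeWeight Tstar w := by
  constructor
  · intro B hB hacyc
    set B' : V → V → Prop := fun a b => B a b ∧ G.Adj a b
    have hB' : ∀ a b, B' a b → ¬ B' b a := fun a b hab hba => hB a b hab.1 hba.1
    have hle : fromRel B' ≤ G := fun a b h => by
      rcases (fromRel_adj _ _ _).1 h with ⟨-, ⟨-, hab⟩ | ⟨-, hba⟩⟩
      exacts [hab, hba.symm]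
    have hacyc' : (fromRel B').IsAcyclic :=
      hacyc.anti (fromRel_mono fun _ _ h => h.1)
    obtain ⟨T, hT', hTG, hT⟩ := hG.exists_isTree_le_of_le_of_isAcyclic hle hacyc'
    calc polyScore B f = polyScore B' f := (polyScore_and_adj hf B).symm
      _ ≤ treeWeight (fromRel B') w :=
        polyScore_le_treeWeight_fromRel hB' fun a b _ => (hw a b).symm ▸ le_max_right _ _
      _ ≤ treeWeight T w := treeWeight_mono hT' w
      _ ≤ treeWeight Tstar w := hmax T hTG hT
  · obtain ⟨B, hB, hBT, hfB⟩ := Tstar.exists_asymm_fromRel_eq f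
    refine ⟨B, hB, hBT ▸ hTree.isAcyclic, ?_⟩
    rw [← hBT]
    exact polyScore_eq_treeWeight_fromRel hB fun a b hab => by rw [hw, max_eq_right (hfB a b hab)]

theorem stmt9 {V : Type*} [Fintype V] (G : SimpleGraph V) (f : V → V → ℕ)
    (hG : G.Connected)
    (hf : ∀ a b : V, ¬ G.Adj a b → f b a = 0)
    (w : Sym2 V → ℕ)
    (hw : ∀ a b : V, w (s(a, b)) = max (f a b) (f b a))
    (Tstar : SimpleGraph V) (hT : Tstar ≤ G) (hTree : Tstar.IsTree)
    (hmax : ∀ T : SimpleGraph V, T ≤ G → T.IsTree →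
      treeWeight T w ≤ treeWeight Tstar w) :
    (∀ B : V → V → Prop, (∀ a b, B a b → ¬ B b a) →
        (SimpleGraph.fromRel B).IsAcyclic →
        polyScore B f ≤ treeWeight Tstar w) ∧
      ∃ B : V → V → Prop, (∀ a b, B a b → ¬ B b a) ∧
        (SimpleGraph.fromRel B).IsAcyclic ∧
        polyScore B f = treeWeight Tstar w :=
  stmt9_general G f hG hf w hw Tstar hTree hmax
end

section
/- Let S = {s₁,…,s_n} ⊆ ℕ^k, t = (t¹,…,t^k) ∈ ℕ^k, d ≥ 1, and let t_max = max_i tⁱ. Define S_eq ⊆ ℕ^{k+1} by appending t_max as a (k+1)-th coordinate to each vector of S, and adding one extra vector b = (d·t_max − t¹, …, d·t_max − t^k, 0); let t_eq = (d·t_max, …, d·t_max) ∈ ℕ^{k+1} (assume d·t_max ≥ tⁱ for all i so b ∈ ℕ^{k+1}). Then there exists S' ⊆ S with |S'| ≥ d and Σ_{s∈S'} s ≤ t if and only if there exists S'_eq ⊆ S_eq with |S'_eq| ≥ d + 1 and Σ_{s∈S'_eq} s ≤ t_eq. -/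
/-!
Appending `t_max` to every vector of `S` makes the last coordinate of a subfamily sum count its
members, so a subfamily of `S_eq` within `d·t_max` that contains `b` has at most `d` other
members, and subtracting `b` recovers the target `t` on the first `k` coordinates. A subfamily
avoiding `b` with `d + 1` members can only fit when `t_max = 0`, and then `b = 0` may be added
to it for free.
-/

open Finset

section UniformTarget

variable {ι : Type*} {k : ℕ} (s : ι → Fin k → ℕ) (t : Fin k → ℕ) (d tmax : ℕ)

/-- The family `S_eq`, indexed by `Option ι`: `none` is the extra vector `b`. -/
def uniformTargetFamily : Option ι → Fin (k + 1) → ℕ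
  | none => Fin.snoc (fun j => d * tmax - t j) 0
  | some i => Fin.snoc (s i) tmax

lemma sum_insertNone_uniformTargetFamily_castSucc (T : Finset ι) (j : Fin k) :
    (∑ a ∈ insertNone T, uniformTargetFamily s t d tmax a) j.castSucc =
      d * tmax - t j + (∑ i ∈ T, s i) j := by
  simp [sum_insertNone, uniformTargetFamily, Finset.sum_apply]

lemma sum_insertNone_uniformTargetFamily_last (T : Finset ι) :
    (∑ a ∈ insertNone T, uniformTargetFamily s t d tmax a) (Fin.last k) = #T * tmax := by
  simp [sum_insertNone, uniformTargetFamily, Finset.sum_apply]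

lemma sum_insertNone_uniformTargetFamily_le_iff (ht : ∀ j, t j ≤ d * tmax) (T : Finset ι) :
    ∑ a ∈ insertNone T, uniformTargetFamily s t d tmax a ≤ (fun _ => d * tmax) ↔
      #T * tmax ≤ d * tmax ∧ ∑ i ∈ T, s i ≤ t := by
  rw [Pi.le_def, Fin.forall_fin_succ', sum_insertNone_uniformTargetFamily_last, and_comm,
    Pi.le_def]
  refine and_congr_right' (forall_congr' fun j => ?_)
  rw [sum_insertNone_uniformTargetFamily_castSucc]
  have := ht j
  omega

lemma sum_uniformTargetFamily_last (U : Finset (Option ι)) :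
    (∑ a ∈ U, uniformTargetFamily s t d tmax a) (Fin.last k) = #(eraseNone U) * tmax := by
  classical
  rw [← sum_insertNone_uniformTargetFamily_last s t d, Finset.sum_apply, Finset.sum_apply,
    insertNone_eraseNone, sum_insert_of_eq_zero_if_notMem]
  simp [uniformTargetFamily]

lemma uniformTargetFamily_none_of_tmax_eq_zero :
    uniformTargetFamily s t d 0 none = 0 := by
  ext j
  induction j using Fin.lastCases <;> simp [uniformTargetFamily]

lemma le_card_eraseNone_and_sum_le_of_sum_uniformTargetFamily_le
    (ht : ∀ j, t j ≤ d * tmax) (U : Finset (Option ι)) (hU : d + 1 ≤ #U)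
    (hsum : ∑ a ∈ U, uniformTargetFamily s t d tmax a ≤ (fun _ => d * tmax)) :
    d ≤ #(eraseNone U) ∧ ∑ i ∈ eraseNone U, s i ≤ t := by
  classical
  have hlast : #(eraseNone U) * tmax ≤ d * tmax :=
    sum_uniformTargetFamily_last s t d tmax U ▸ hsum (Fin.last k)
  have hb : none ∉ U → uniformTargetFamily s t d tmax none = 0 := fun hnone => by
    have htmax : tmax = 0 := by
      rw [card_eraseNone_of_not_mem hnone] at hlast
      by_contra h
      have := Nat.le_of_mul_le_mul_right hlast (Nat.pos_of_ne_zero h)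
      omega
    exact htmax ▸ uniformTargetFamily_none_of_tmax_eq_zero s t d
  have hinsert : insertNone (eraseNone U) = insert none U := insertNone_eraseNone U
  have hcard : #U ≤ #(eraseNone U) + 1 :=
    card_insertNone (eraseNone U) ▸ hinsert ▸ card_le_card (subset_insert none U)
  refine ⟨by omega, ((sum_insertNone_uniformTargetFamily_le_iff s t d tmax ht _).1 ?_).2⟩
  rwa [hinsert, sum_insert_of_eq_zero_if_notMem hb]

end UniformTarget

/-- making the target of Dual Multidimensional Subset Sum
uniform.  `seq` indexes the vectors of `S_eq`: `seq (some i)` is `s i` with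
`t_max` appended, and `seq none` is the extra vector
`b = (d·t_max − t¹, …, d·t_max − t^k, 0)`. -/
theorem stmt11 {n k : ℕ} (s : Fin n → Fin k → ℕ) (t : Fin k → ℕ) (d : ℕ)
    (hd : 1 ≤ d)
    (tmax : ℕ) (htmax : tmax = Finset.univ.sup t)
    (seq : Option (Fin n) → Fin (k + 1) → ℕ)
    (hsome : ∀ i : Fin n, seq (some i) = Fin.snoc (s i) tmax)
    (hnone : seq none = Fin.snoc (fun j => d * tmax - t j) 0) :
    (∃ S' : Finset (Fin n), d ≤ S'.card ∧ ∀ j : Fin k, (∑ i ∈ S', s i) j ≤ t j) ↔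
      (∃ Seq : Finset (Option (Fin n)), d + 1 ≤ Seq.card ∧
        ∀ j : Fin (k + 1), (∑ i ∈ Seq, seq i) j ≤ d * tmax) := by
  have ht : ∀ j, t j ≤ d * tmax := fun j =>
    htmax ▸ (le_sup (mem_univ j)).trans (Nat.le_mul_of_pos_left _ hd)
  obtain rfl : seq = uniformTargetFamily s t d tmax := by
    funext a
    cases a <;> simp [uniformTargetFamily, hsome, hnone]
  constructor
  · rintro ⟨S', hcard, hS'⟩
    obtain ⟨T, hTS', hT⟩ := exists_subset_card_eq hcard
    refine ⟨insertNone T, by rw [card_insertNone, hT], ?_⟩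
    exact (sum_insertNone_uniformTargetFamily_le_iff s t d tmax ht T).2
      ⟨hT ▸ le_rfl, (sum_le_sum_of_subset hTS').trans hS'⟩
  · rintro ⟨U, hcard, hU⟩
    exact ⟨eraseNone U,
      le_card_eraseNone_and_sum_le_of_sum_uniformTargetFamily_le s t d tmax ht U hcard hU⟩
end

section
/- Consider the BNSL instance constructed from a k-partite m-regular graph G = (V₁∪…∪V_k, E) as follows: the variable set is {v_i : i ∈ [k]} ∪ {v_e : e ∈ E}; for an edge e between colors i and j, the only nonzero parent set of v_e is {v_i, v_j} with score 1; for each i and each vertex v ∈ V_i, the parent set P_i^v = {v_e : e incident to v} of v_i has score m+1, and all other parent sets score 0. Then there exists a DAG over the variable set with total score at least |E| + k + C(k,2) if and only if G contains a k-colored clique; moreover no DAG achieves score greater than |E| + k + C(k,2). -/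
/-!
For an acyclic `D`, let `X` contain one vertex `x` for each color whose variable takes the
parent set `P_{c x}^x`; then `c` is injective on `X` and the colors score `|X| (m + 1)`. An edge
variable that scores has the colors of its endpoints as parents, so by acyclicity it cannot meet
`X` (every edge at `x ∈ X` is a parent of `v_{c x}`). As `|X| m` counts the edges meeting `X`,
those inside `X` twice, the score is at most `|E| + |X| + #(edges inside X) ≤ |E| + k + C(k,2)`,
with equality only when `|X| = k` and `X` is a clique. Conversely, for a colorful clique `X`, let
each color take the incidence set of its clique vertex and each edge avoiding `X` take its
endpoint colors: this attains the bound.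
-/

set_option linter.deprecated false

open scoped Classical

open SimpleGraph Finset

namespace SimpleGraph

variable {α : Type*} [Fintype α] (G : SimpleGraph α)

noncomputable def edgesMeeting (X : Finset α) : Finset G.edgeSet := {e | ∃ x ∈ X, x ∈ (e : Sym2 α)}

noncomputable def edgesInside (X : Finset α) : Finset G.edgeSet := {e | ∀ x ∈ (e : Sym2 α), x ∈ X}

lemma card_edges_mem_eq_degree (x : α) :
    #{e : G.edgeSet | x ∈ (e : Sym2 α)} = G.degree x := by
  rw [← card_incidenceFinset_eq_degree]
  refine card_bij (fun e _ => (e : Sym2 α)) ?_ (fun _ _ _ _ => Subtype.ext) ?_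
  · intro e he
    exact (mem_incidenceFinset ..).2 ⟨e.2, (mem_filter.1 he).2⟩
  · intro e he
    obtain ⟨he, hx⟩ := (mem_incidenceFinset ..).1 he
    exact ⟨⟨e, he⟩, by simpa using hx, rfl⟩

lemma card_filter_mem_edge (X : Finset α) (e : G.edgeSet) :
    #{x ∈ X | x ∈ (e : Sym2 α)} =
      (if e ∈ G.edgesMeeting X then 1 else 0) + (if e ∈ G.edgesInside X then 1 else 0) := by
  obtain ⟨e, he⟩ := e
  induction e using Sym2.ind with
  | _ a b =>
    have hab : a ≠ b := G.ne_of_adj he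
    have hfilter : {x ∈ X | x ∈ s(a, b)} = ({a, b} : Finset α).filter (· ∈ X) := by
      ext; simp [and_comm]
    rw [hfilter, filter_insert, filter_singleton]
    by_cases ha : a ∈ X <;> by_cases hb : b ∈ X <;>
      simp [edgesMeeting, edgesInside, ha, hb, hab, and_or_left, exists_or, or_imp, forall_and]

lemma sum_degree_eq_card_edgesMeeting_add_card_edgesInside (X : Finset α) :
    ∑ x ∈ X, G.degree x = #(G.edgesMeeting X) + #(G.edgesInside X) := by
  simp_rw [← card_edges_mem_eq_degree, card_filter]
  rw [sum_comm]
  simp_rw [← card_filter, card_filter_mem_edge, sum_add_distrib, ← card_filter, filter_mem_eq_inter,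
    univ_inter]

lemma card_edgesInside_eq (X : Finset α) :
    #(G.edgesInside X) = #{z ∈ X.offDiag.image Sym2.mk.uncurry | z ∈ G.edgeSet} := by
  rw [← card_map (Function.Embedding.subtype _)]
  congr 1
  ext z
  induction z using Sym2.ind with
  | _ a b =>
    simp only [edgesInside, mem_map, mem_filter, mem_univ, true_and,
      Function.Embedding.subtype_apply, Subtype.exists, exists_and_left, exists_prop,
      exists_eq_right_right, Sym2.mem_iff, forall_eq_or_imp, forall_eq, mem_edgeSet, mem_image,
      mem_offDiag, ne_eq, Prod.exists, Function.uncurry_apply_pair, Sym2.eq, Sym2.rel_iff',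
      Prod.mk.injEq, Prod.swap_prod_mk, and_congr_left_iff]
    intro h
    constructor
    · rintro ⟨ha, hb⟩
      exact ⟨a, b, ⟨ha, hb, G.ne_of_adj h⟩, Or.inl ⟨rfl, rfl⟩⟩
    · rintro ⟨c, d, ⟨hc, hd, -⟩, ⟨rfl, rfl⟩ | ⟨rfl, rfl⟩⟩
      exacts [⟨hc, hd⟩, ⟨hd, hc⟩]

lemma card_edgesInside_le (X : Finset α) : #(G.edgesInside X) ≤ (#X).choose 2 := by
  rw [card_edgesInside_eq, ← Sym2.card_image_offDiag]
  exact card_filter_le _ _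

lemma card_edgesInside_eq_choose_two_iff (X : Finset α) :
    #(G.edgesInside X) = (#X).choose 2 ↔ G.IsClique (X : Set α) := by
  rw [card_edgesInside_eq, ← Sym2.card_image_offDiag, card_filter_eq_iff]
  simp only [mem_image, mem_offDiag, ne_eq, Prod.exists, Function.uncurry_apply_pair,
    forall_exists_index, and_imp, IsClique, Set.Pairwise, SetLike.mem_coe]
  exact ⟨fun h x hx y hy hxy => h _ x y hx hy hxy rfl,
    fun h _ x y hx hy hxy hz => hz ▸ h hx hy hxy⟩

lemma card_add_card_edgesInside_le {n : ℕ} {X : Finset α} (hX : #X ≤ n) :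
    #X + #(G.edgesInside X) ≤ n + n.choose 2 := by
  have := G.card_edgesInside_le X
  have := Nat.choose_le_choose 2 hX
  omega

lemma card_eq_and_isClique_of_le {n : ℕ} {X : Finset α} (hX : #X ≤ n)
    (h : n + n.choose 2 ≤ #X + #(G.edgesInside X)) : #X = n ∧ G.IsClique (X : Set α) := by
  have hle := G.card_edgesInside_le X
  have := Nat.choose_le_choose 2 hX
  have hn : #X = n := by omega
  refine ⟨hn, (G.card_edgesInside_eq_choose_two_iff X).1 ?_⟩
  rw [hn] at hle ⊢
  omega

lemma card_mul_succ_add_card_le {m : ℕ} (hreg : G.IsRegularOfDegree m) (X : Finset α)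
    {T : Finset G.edgeSet} (hT : Disjoint T (G.edgesMeeting X)) :
    #X * (m + 1) + #T ≤ G.edgeSet.ncard + #X + #(G.edgesInside X) := by
  have hdeg := G.sum_degree_eq_card_edgesMeeting_add_card_edgesInside X
  rw [sum_const_nat fun x _ => hreg x] at hdeg
  have hTM := card_union_of_disjoint hT ▸ card_le_univ (T ∪ G.edgesMeeting X)
  rw [← Nat.card_coe_set_eq, Nat.card_eq_fintype_card, Nat.mul_succ]
  omega

lemma isRegularOfDegree_of_ncard_neighborSet {m : ℕ}
    (hreg : ∀ x, (G.neighborSet x).ncard = m) : G.IsRegularOfDegree m := fun x => by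
  rw [← card_neighborFinset_eq_degree, neighborFinset_def, ← Set.ncard_eq_toFinset_card', hreg]

end SimpleGraph

lemma Relation.irreflexive_transGen_of_lt_comp {β γ : Type*} [Preorder γ] {r : β → β → Prop}
    (rank : β → γ) (h : ∀ a b, r a b → rank a < rank b) : Irreflexive (Relation.TransGen r) :=
  fun a ha => lt_irrefl (rank a) <| by
    simpa [transGen_eq_self] using Relation.TransGen.lift rank h a a ha

namespace CliqueBNSL

open Sum

variable {α : Type*} (G : SimpleGraph α) {k : ℕ}

variable (k) in
def incidentVars (x : α) : Set (Fin k ⊕ G.edgeSet) :=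
  {u | ∃ ε : G.edgeSet, u = inr ε ∧ x ∈ (ε : Sym2 α)}

def endpointColors (c : α → Fin k) (e : G.edgeSet) : Set (Fin k ⊕ G.edgeSet) :=
  {u | ∃ x : α, x ∈ (e : Sym2 α) ∧ u = inl (c x)}

lemma endpointColors_nonempty (c : α → Fin k) (e : G.edgeSet) :
    (endpointColors G c e).Nonempty := by
  obtain ⟨⟨a, b⟩, he⟩ := Quot.exists_rep (e : Sym2 α)
  exact ⟨_, a, he ▸ Sym2.mem_mk_left a b, rfl⟩

lemma sum_score_eq [Fintype α] {m : ℕ} (c : α → Fin k)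
    (f : (Fin k ⊕ G.edgeSet) → Set (Fin k ⊕ G.edgeSet) → ℕ)
    (hfe : ∀ e P, f (inr e) P = if P = endpointColors G c e then 1 else 0)
    (hfi : ∀ i P, f (inl i) P = if ∃ x, c x = i ∧ P = incidentVars G k x then m + 1 else 0)
    (P : Fin k ⊕ G.edgeSet → Set (Fin k ⊕ G.edgeSet)) :
    ∑ w, f w (P w) = #{i | ∃ x, c x = i ∧ P (inl i) = incidentVars G k x} * (m + 1) +
      #{e | P (inr e) = endpointColors G c e} := by
  simp [Fintype.sum_sum_type, hfe, hfi, sum_ite, mul_comm]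

lemma disjoint_edgesMeeting_of_irreflexive [Fintype α] (c : α → Fin k)
    {D : (Fin k ⊕ G.edgeSet) → (Fin k ⊕ G.edgeSet) → Prop}
    (hD : Irreflexive (Relation.TransGen D)) {X : Finset α}
    (hX : ∀ x ∈ X, {u | D u (inl (c x))} = incidentVars G k x) :
    Disjoint ({e | {u | D u (inr e)} = endpointColors G c e} : Finset G.edgeSet)
      (G.edgesMeeting X) := by
  refine Finset.disjoint_left.2 fun e he hmeet => ?_
  obtain ⟨x, hxX, hxe⟩ := (mem_filter.1 hmeet).2
  have hex : D (inr e) (inl (c x)) := by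
    change inr e ∈ {u | D u (inl (c x))}
    rw [hX x hxX]
    exact ⟨e, rfl, hxe⟩
  have hxe : D (inl (c x)) (inr e) := by
    change inl (c x) ∈ {u | D u (inr e)}
    rw [(mem_filter.1 he).2]
    exact ⟨x, hxe, rfl⟩
  exact hD _ (.head hex (.single hxe))

lemma exists_injOn_score_le [Fintype α] {m : ℕ} (c : α → Fin k) (hreg : G.IsRegularOfDegree m)
    (f : (Fin k ⊕ G.edgeSet) → Set (Fin k ⊕ G.edgeSet) → ℕ)
    (hfe : ∀ e P, f (inr e) P = if P = endpointColors G c e then 1 else 0)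
    (hfi : ∀ i P, f (inl i) P = if ∃ x, c x = i ∧ P = incidentVars G k x then m + 1 else 0)
    {D : (Fin k ⊕ G.edgeSet) → (Fin k ⊕ G.edgeSet) → Prop}
    (hD : Irreflexive (Relation.TransGen D)) :
    ∃ X : Finset α, Set.InjOn c X ∧
      ∑ w, f w {u | D u w} ≤ G.edgeSet.ncard + #X + #(G.edgesInside X) := by
  set Y : Finset α := {x | {u | D u (inl (c x))} = incidentVars G k x}
  obtain ⟨X, hXY, hinj, himage⟩ :=
    exists_subset_injOn_image_eq_of_surjOn (Y : Set α) (Y.image c)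
      (by rw [coe_image]; exact Set.surjOn_image c Y)
  have hcolors : ({i | ∃ x, c x = i ∧ {u | D u (inl i)} = incidentVars G k x} : Finset (Fin k)) =
      X.image c := by
    rw [himage]
    ext i
    simp only [mem_filter, mem_univ, true_and, mem_image, Y]
    exact ⟨fun ⟨x, hx, hP⟩ => ⟨x, hx ▸ hP, hx⟩, fun ⟨x, hP, hx⟩ => ⟨x, hx, hx ▸ hP⟩⟩
  refine ⟨X, hinj, ?_⟩
  rw [sum_score_eq G c f hfe hfi, hcolors, card_image_of_injOn hinj]
  exact G.card_mul_succ_add_card_le hreg X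
    (disjoint_edgesMeeting_of_irreflexive G c hD fun x hx => (mem_filter.1 (hXY hx)).2)

lemma exists_colorful_clique [Fintype α] {c : α → Fin k} {X : Finset α} (hinj : Set.InjOn c X)
    (hX : #X = k) (hclique : G.IsClique (X : Set α)) :
    ∃ v : Fin k → α, (∀ i, c (v i) = i) ∧ ∀ i j, i ≠ j → G.Adj (v i) (v j) := by
  have himage : X.image c = univ :=
    eq_univ_of_card _ (by rw [card_image_of_injOn hinj, hX, Fintype.card_fin])
  choose v hvX hv using fun i => mem_image.1 (himage ▸ mem_univ i)
  exact ⟨v, hv, fun i j hij => hclique (hvX i) (hvX j) fun h => hij (by rw [← hv i, ← hv j, h])⟩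

lemma score_le_and_exists_clique [Fintype α] {m : ℕ} (c : α → Fin k)
    (hreg : G.IsRegularOfDegree m) (f : (Fin k ⊕ G.edgeSet) → Set (Fin k ⊕ G.edgeSet) → ℕ)
    (hfe : ∀ e P, f (inr e) P = if P = endpointColors G c e then 1 else 0)
    (hfi : ∀ i P, f (inl i) P = if ∃ x, c x = i ∧ P = incidentVars G k x then m + 1 else 0)
    {D : (Fin k ⊕ G.edgeSet) → (Fin k ⊕ G.edgeSet) → Prop}
    (hD : Irreflexive (Relation.TransGen D)) :
    ∑ w, f w {u | D u w} ≤ G.edgeSet.ncard + k + k.choose 2 ∧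
      (G.edgeSet.ncard + k + k.choose 2 ≤ ∑ w, f w {u | D u w} →
        ∃ v : Fin k → α, (∀ i, c (v i) = i) ∧ ∀ i j, i ≠ j → G.Adj (v i) (v j)) := by
  obtain ⟨X, hinj, hscore⟩ := exists_injOn_score_le G c hreg f hfe hfi hD
  have hXk : #X ≤ k := (card_le_card_of_injOn c (fun _ _ => mem_univ _) hinj).trans_eq (card_fin k)
  have hinside := G.card_add_card_edgesInside_le hXk
  refine ⟨by omega, fun hge => ?_⟩
  obtain ⟨hX, hclique⟩ := G.card_eq_and_isClique_of_le hXk (by omega)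
  exact exists_colorful_clique G hinj hX hclique

lemma exists_irreflexive_score_eq [Fintype α] {m : ℕ} (c : α → Fin k)
    (hreg : G.IsRegularOfDegree m) (f : (Fin k ⊕ G.edgeSet) → Set (Fin k ⊕ G.edgeSet) → ℕ)
    (hfe : ∀ e P, f (inr e) P = if P = endpointColors G c e then 1 else 0)
    (hfi : ∀ i P, f (inl i) P = if ∃ x, c x = i ∧ P = incidentVars G k x then m + 1 else 0)
    (v : Fin k → α) (hv : ∀ i, c (v i) = i) (hadj : ∀ i j, i ≠ j → G.Adj (v i) (v j)) :
    ∃ D : (Fin k ⊕ G.edgeSet) → (Fin k ⊕ G.edgeSet) → Prop, Irreflexive (Relation.TransGen D) ∧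
      ∑ w, f w {u | D u w} = G.edgeSet.ncard + k + k.choose 2 := by
  set X : Finset α := univ.image v
  have hinj : Function.Injective v := fun i j h => by rw [← hv i, ← hv j, h]
  have hXk : #X = k := by rw [card_image_of_injective _ hinj, card_univ, Fintype.card_fin]
  have hclique : G.IsClique (X : Set α) := by
    simp only [X, coe_image, coe_univ, Set.image_univ]
    rintro _ ⟨i, rfl⟩ _ ⟨j, rfl⟩ hij
    exact hadj i j fun h => hij (h ▸ rfl)
  let P : Fin k ⊕ G.edgeSet → Set (Fin k ⊕ G.edgeSet) := Sum.elim (fun i => incidentVars G k (v i))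
    fun e => if e ∈ G.edgesMeeting X then ∅ else endpointColors G c e
  -- colors lie above the edges meeting `X` and below the others
  let rank : Fin k ⊕ G.edgeSet → ℕ := Sum.elim (fun _ => 1)
    fun e => if e ∈ G.edgesMeeting X then 0 else 2
  refine ⟨fun u w => u ∈ P w, Relation.irreflexive_transGen_of_lt_comp rank ?_, ?_⟩
  · rintro u (i | e) hu
    · obtain ⟨e, rfl, hie⟩ := hu
      have he : e ∈ G.edgesMeeting X :=
        mem_filter.2 ⟨mem_univ _, v i, mem_image_of_mem _ (mem_univ _), hie⟩
      simp [rank, he]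
    · by_cases he : e ∈ G.edgesMeeting X
      · simp [P, he] at hu
      · simp only [P, elim_inr, if_neg he] at hu
        obtain ⟨x, -, rfl⟩ := hu
        simp [rank, he]
  · have hcolors : #{i | ∃ x, c x = i ∧ P (inl i) = incidentVars G k x} = k := by
      rw [filter_true_of_mem fun i _ => ⟨v i, hv i, rfl⟩, card_univ, Fintype.card_fin]
    have hedges : ({e | P (inr e) = endpointColors G c e} : Finset G.edgeSet) =
        (G.edgesMeeting X)ᶜ := by
      ext e
      by_cases he : e ∈ G.edgesMeeting X <;>
        simp [P, he, (endpointColors_nonempty G c e).ne_empty.symm]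
    have hdeg := G.sum_degree_eq_card_edgesMeeting_add_card_edgesInside X
    rw [sum_const_nat fun x _ => hreg x, (G.card_edgesInside_eq_choose_two_iff X).2 hclique,
      hXk] at hdeg
    have hmeet := card_le_univ (G.edgesMeeting X)
    change ∑ w, f w (P w) = _
    rw [sum_score_eq G c f hfe hfi P, hcolors, hedges, card_compl, ← Nat.card_coe_set_eq,
      Nat.card_eq_fintype_card, Nat.mul_succ]
    omega

end CliqueBNSL

open CliqueBNSL in
theorem stmt13_general {α : Type*} [Fintype α] (G : SimpleGraph α) (k m : ℕ)
    (c : α → Fin k)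
    (hreg : ∀ x : α, (G.neighborSet x).ncard = m)
    (f : (Fin k ⊕ ↥G.edgeSet) → Set (Fin k ⊕ ↥G.edgeSet) → ℕ)
    (hfe : ∀ (e : ↥G.edgeSet) (P : Set (Fin k ⊕ ↥G.edgeSet)),
      f (Sum.inr e) P =
        if P = {u | ∃ x : α, x ∈ (e : Sym2 α) ∧ u = Sum.inl (c x)} then 1 else 0)
    (hfi : ∀ (i : Fin k) (P : Set (Fin k ⊕ ↥G.edgeSet)),
      f (Sum.inl i) P =
        if ∃ x : α, c x = i ∧
            P = {u | ∃ ε : ↥G.edgeSet, u = Sum.inr ε ∧ x ∈ (ε : Sym2 α)}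
        then m + 1 else 0) :
    (∀ D : (Fin k ⊕ ↥G.edgeSet) → (Fin k ⊕ ↥G.edgeSet) → Prop,
        Irreflexive (Relation.TransGen D) →
        ∑ w : Fin k ⊕ ↥G.edgeSet, f w {u | D u w} ≤
          G.edgeSet.ncard + k + Nat.choose k 2) ∧
    ((∃ D : (Fin k ⊕ ↥G.edgeSet) → (Fin k ⊕ ↥G.edgeSet) → Prop,
        Irreflexive (Relation.TransGen D) ∧
        G.edgeSet.ncard + k + Nat.choose k 2 ≤
          ∑ w : Fin k ⊕ ↥G.edgeSet, f w {u | D u w}) ↔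
      ∃ v : Fin k → α, (∀ i, c (v i) = i) ∧
        ∀ i j, i ≠ j → G.Adj (v i) (v j)) := by
  have hdeg := G.isRegularOfDegree_of_ncard_neighborSet hreg
  refine ⟨fun D hD => (score_le_and_exists_clique G c hdeg f hfe hfi hD).1,
    fun ⟨D, hD, hge⟩ => (score_le_and_exists_clique G c hdeg f hfe hfi hD).2 hge,
    fun ⟨v, hv, hadj⟩ => ?_⟩
  obtain ⟨D, hD, hscore⟩ := exists_irreflexive_score_eq G c hdeg f hfe hfi v hv hadj
  exact ⟨D, hD, hscore.ge⟩

/-- the BNSL instance built from a `k`-partite `m`-regular graph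
`G` (with coloring `c`).  Variables are `Fin k ⊕ ↥G.edgeSet`.  For an edge `e`
the only nonzero parent set of `v_e` consists of the (color vertices of the)
two endpoints of `e`, with score `1`; for a color `i`, any parent set of the
form `{v_e : e incident to x}` for some vertex `x` of color `i` scores `m+1`.
A DAG over the variables achieves total score at least `|E| + k + C(k,2)` iff
`G` has a `k`-colored clique, and no DAG scores more. -/
theorem stmt13 {α : Type*} [Fintype α] (G : SimpleGraph α) (k m : ℕ)
    (c : α → Fin k)
    (hpart : ∀ x y : α, G.Adj x y → c x ≠ c y)
    (hreg : ∀ x : α, (G.neighborSet x).ncard = m)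
    (f : (Fin k ⊕ ↥G.edgeSet) → Set (Fin k ⊕ ↥G.edgeSet) → ℕ)
    (hfe : ∀ (e : ↥G.edgeSet) (P : Set (Fin k ⊕ ↥G.edgeSet)),
      f (Sum.inr e) P =
        if P = {u | ∃ x : α, x ∈ (e : Sym2 α) ∧ u = Sum.inl (c x)} then 1 else 0)
    (hfi : ∀ (i : Fin k) (P : Set (Fin k ⊕ ↥G.edgeSet)),
      f (Sum.inl i) P =
        if ∃ x : α, c x = i ∧
            P = {u | ∃ ε : ↥G.edgeSet, u = Sum.inr ε ∧ x ∈ (ε : Sym2 α)}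
        then m + 1 else 0) :
    (∀ D : (Fin k ⊕ ↥G.edgeSet) → (Fin k ⊕ ↥G.edgeSet) → Prop,
        Irreflexive (Relation.TransGen D) →
        ∑ w : Fin k ⊕ ↥G.edgeSet, f w {u | D u w} ≤
          G.edgeSet.ncard + k + Nat.choose k 2) ∧
    ((∃ D : (Fin k ⊕ ↥G.edgeSet) → (Fin k ⊕ ↥G.edgeSet) → Prop,
        Irreflexive (Relation.TransGen D) ∧
        G.edgeSet.ncard + k + Nat.choose k 2 ≤
          ∑ w : Fin k ⊕ ↥G.edgeSet, f w {u | D u w}) ↔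
      ∃ v : Fin k → α, (∀ i, c (v i) = i) ∧
        ∀ i j, i ≠ j → G.Adj (v i) (v j)) :=
  stmt13_general G k m c hreg f hfe hfi
end
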